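/- Let β ∈ (0,1) and let S ⊆ ℤ² be β-separated-covering. Then there exists r₀ > 0 such that for every x ∈ ℝ² and every r with r > r₀ and |x|^β ≤ r ≤ 8|x|^β, one has card(S ∩ B(x,r)) ≤ 324·|x|^{−2β}·r². -/

import Mathlib

/-- The canonical embedding of `ℤ²` into the Euclidean plane. -/
noncomputable def embed2 (s : ℤ × ℤ) : EuclideanSpace ℝ (Fin 2) :=
  (WithLp.equiv 2 (Fin 2 → ℝ)).symm ![(s.1 : ℝ), (s.2 : ℝ)]

/-- A set `S ⊆ ℤ²` is `β`-separated-covering if it contains `(0,0)`, every point of `S`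
has even coordinate sum, distinct points `s, s'` of `S` satisfy
`|s - s'| ≥ |s|^β + |s'|^β`, and every `x ∈ ℝ²` admits `s ∈ S` with
`|x - s| ≤ |s|^β + (|x|+1)^β + 1`. -/
def SepCov (β : ℝ) (S : Set (ℤ × ℤ)) : Prop :=
  ((0, 0) : ℤ × ℤ) ∈ S ∧
  (∀ s ∈ S, Even (s.1 + s.2)) ∧
  (∀ s ∈ S, ∀ s' ∈ S, s ≠ s' →
    ‖embed2 s - embed2 s'‖ ≥ ‖embed2 s‖ ^ β + ‖embed2 s'‖ ^ β) ∧
  (∀ x : EuclideanSpace ℝ (Fin 2), ∃ s ∈ S,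
    ‖x - embed2 s‖ ≤ ‖embed2 s‖ ^ β + (‖x‖ + 1) ^ β + 1)

/-!
Since `β < 1`, for `r₀` large the radius `r ≤ 8‖x‖^β` is at most `(1 - 2^(-1/β))‖x‖`, so every
point `s` of `S` in `B(x, r)` has `‖s‖^β ≥ ‖x‖^β / 2`, and the separation condition makes these
points `‖x‖^β`-separated. A `d`-separated set in a ball of radius `r ≥ d` in the plane has at most
`(6r/d)²` points: sort them into grid squares of side `d/2`, each holding at most one of them.
-/

open Metric Finset

lemma mul_rpow_le_self {β C t : ℝ} (hβ : β < 1) (hC : 0 < C) (ht : C ^ (1 - β)⁻¹ ≤ t) :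
    C * t ^ β ≤ t := by
  have ht0 : 0 < t := (Real.rpow_pos_of_pos hC _).trans_le ht
  have hC_le : C ≤ t ^ (1 - β) :=
    calc C = (C ^ (1 - β)⁻¹) ^ (1 - β) := by
          rw [← Real.rpow_mul hC.le, inv_mul_cancel₀ (by linarith), Real.rpow_one]
      _ ≤ t ^ (1 - β) := Real.rpow_le_rpow (by positivity) ht (by linarith)
  calc C * t ^ β ≤ t ^ (1 - β) * t ^ β := by gcongr
    _ = t := by rw [← Real.rpow_add ht0]; simp

lemma rpow_norm_div_two_le_of_mem_ball {E : Type*} [SeminormedAddCommGroup E] {β r : ℝ}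
    (hβ : 0 < β) {x y : E} (hr : r ≤ (1 - 2 ^ (-β⁻¹)) * ‖x‖) (hy : y ∈ ball x r) :
    ‖x‖ ^ β / 2 ≤ ‖y‖ ^ β := by
  have hy' : 2 ^ (-β⁻¹) * ‖x‖ ≤ ‖y‖ := by
    have := norm_sub_norm_le x y
    rw [mem_ball, dist_eq_norm, norm_sub_rev] at hy
    linarith
  calc ‖x‖ ^ β / 2 = (2 ^ (-β⁻¹) * ‖x‖) ^ β := by
        rw [Real.mul_rpow (by positivity) (norm_nonneg x), ← Real.rpow_mul zero_le_two, neg_mul,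
          inv_mul_cancel₀ hβ.ne', Real.rpow_neg_one]
        ring
    _ ≤ ‖y‖ ^ β := Real.rpow_le_rpow (by positivity) hy' hβ.le

lemma abs_sub_lt_of_floor_div_eq_floor_div {a b c : ℝ} (hc : 0 < c) (h : ⌊a / c⌋ = ⌊b / c⌋) :
    |a - b| < c := by
  have := Int.abs_sub_lt_one_of_floor_eq_floor h
  rwa [← sub_div, abs_div, abs_of_pos hc, div_lt_one hc] at this

lemma card_Icc_floor_div_le {a r c : ℝ} (hr : 0 ≤ r) (hc : 0 < c) :
    (#(Icc ⌊(a - r) / c⌋ ⌊(a + r) / c⌋) : ℝ) ≤ 2 * r / c + 2 := by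
  have hcard : (#(Icc ⌊(a - r) / c⌋ ⌊(a + r) / c⌋) : ℝ) =
      max ((⌊(a + r) / c⌋ : ℝ) + 1 - ⌊(a - r) / c⌋) 0 := by
    rw [Int.card_Icc]
    exact_mod_cast congrArg (Int.cast : ℤ → ℝ) (Int.toNat_eq_max _)
  have h_upper := Int.floor_le ((a + r) / c)
  have h_lower := Int.sub_one_lt_floor ((a - r) / c)
  have : (a + r) / c - (a - r) / c = 2 * r / c := by ring
  rw [hcard]
  exact max_le (by linarith) (by positivity)

lemma PiLp.dist_le_sum_dist {ι : Type*} [Fintype ι] {β : ι → Type*}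
    [∀ i, SeminormedAddCommGroup (β i)] (y z : PiLp 2 (fun i => β i)) :
    dist y z ≤ ∑ i, dist (y i) (z i) := by
  rw [PiLp.dist_eq_of_L2]
  calc √(∑ i, dist (y i) (z i) ^ 2) ≤ √((∑ i, dist (y i) (z i)) ^ 2) :=
        Real.sqrt_le_sqrt (sum_sq_le_sq_sum_of_nonneg fun _ _ => dist_nonneg)
    _ = ∑ i, dist (y i) (z i) := Real.sqrt_sq (sum_nonneg fun _ _ => dist_nonneg)

theorem ncard_le_of_pairwise_le_dist_of_subset_ball {ι : Type*} [Fintype ι] [Nonempty ι]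
    {P : Set (EuclideanSpace ℝ ι)} {x : EuclideanSpace ℝ ι} {r d : ℝ} (hd : 0 < d) (hdr : d ≤ r)
    (hPx : P ⊆ ball x r) (hP : P.Pairwise fun y z => d ≤ dist y z) :
    (P.ncard : ℝ) ≤ ((2 * Fintype.card ι + 2) * r / d) ^ Fintype.card ι := by
  classical
  set n := Fintype.card ι
  have hn : (0 : ℝ) < n := by exact_mod_cast Fintype.card_pos
  set c := d / n
  have hc : 0 < c := by positivity
  -- A cube of side `d / n` has ℓ¹-diameter `d`, so it contains at most one point of `P`.
  let cell : EuclideanSpace ℝ ι → ι → ℤ := fun y i => ⌊y i / c⌋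
  set lo : ι → ℤ := fun i => ⌊(x i - r) / c⌋
  set hi : ι → ℤ := fun i => ⌊(x i + r) / c⌋
  have hmaps : Set.MapsTo cell P (Icc lo hi : Set (ι → ℤ)) := by
    intro y hy
    have hyx i : |y i - x i| < r :=
      (PiLp.dist_apply_le y x i).trans_lt (mem_ball.1 (hPx hy))
    rw [coe_Icc]
    exact ⟨fun i => Int.floor_le_floor (by gcongr; linarith [(abs_lt.1 (hyx i)).1]),
      fun i => Int.floor_le_floor (by gcongr; linarith [(abs_lt.1 (hyx i)).2])⟩
  have hinj : Set.InjOn cell P := by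
    intro y hy z hz hyz
    by_contra hne
    have hclose : ∀ i, dist (y i) (z i) < c := fun i =>
      abs_sub_lt_of_floor_div_eq_floor_div hc (congrFun hyz i)
    have : dist y z < d :=
      calc dist y z ≤ ∑ i, dist (y i) (z i) := PiLp.dist_le_sum_dist y z
        _ < ∑ _ : ι, c := sum_lt_sum_of_nonempty univ_nonempty fun i _ => hclose i
        _ = d := by simp [c, n, mul_div_cancel₀ d hn.ne']
    exact (hP hy hz hne).not_gt this
  have hside : ∀ i, (#(Icc (lo i) (hi i)) : ℝ) ≤ (2 * n + 2) * r / d := fun i =>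
    calc (#(Icc (lo i) (hi i)) : ℝ) ≤ 2 * r / c + 2 := card_Icc_floor_div_le (hd.le.trans hdr) hc
      _ = 2 * n * (r / d) + 2 := by simp only [c]; field_simp
      _ ≤ (2 * n + 2) * r / d := by
        have : 1 ≤ r / d := (one_le_div hd).2 hdr
        rw [mul_div_assoc]
        nlinarith
  calc (P.ncard : ℝ) ≤ #(Icc lo hi) := by
        exact_mod_cast (Set.ncard_coe_finset (Icc lo hi)) ▸
          Set.ncard_le_ncard_of_injOn cell hmaps hinj (Icc lo hi).finite_toSet
    _ = ∏ i, (#(Icc (lo i) (hi i)) : ℝ) := by rw [Pi.card_Icc]; push_cast; rfl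
    _ ≤ ∏ _ : ι, (2 * n + 2) * r / d := prod_le_prod (fun _ _ => by positivity) fun i _ => hside i
    _ = ((2 * n + 2) * r / d) ^ n := by rw [prod_const, card_univ]

lemma embed2_injective : Function.Injective embed2 := by
  intro s t h
  have h0 := congrArg (· 0) h
  have h1 := congrArg (· 1) h
  simp only [embed2] at h0 h1
  simp at h0 h1
  exact Prod.ext h0 h1

/-- For a `β`-separated-covering set `S`, there is `r₀ > 0` such that for all `x ∈ ℝ²`
and all `r` with `r > r₀` and `|x|^β ≤ r ≤ 8|x|^β` one has
`card(S ∩ B(x,r)) ≤ 324·|x|^(-2β)·r²`. -/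
theorem card_inter_ball_intermediate (β : ℝ) (hβ0 : 0 < β) (hβ1 : β < 1)
    (S : Set (ℤ × ℤ)) (hS : SepCov β S) :
    ∃ r₀ > (0 : ℝ), ∀ x : EuclideanSpace ℝ (Fin 2), ∀ r : ℝ, r > r₀ →
      ‖x‖ ^ β ≤ r → r ≤ 8 * ‖x‖ ^ β →
      ({s ∈ S | embed2 s ∈ Metric.ball x r}.ncard : ℝ) ≤
        324 * ‖x‖ ^ (-(2 * β)) * r ^ 2 := by
  obtain ⟨-, -, hsep, -⟩ := hS
  set ε : ℝ := 1 - 2 ^ (-β⁻¹)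
  have hε : 0 < ε :=
    sub_pos.2 (Real.rpow_lt_one_of_one_lt_of_neg one_lt_two (by simpa using hβ0))
  set M : ℝ := (8 / ε) ^ (1 - β)⁻¹
  have hM : 0 < M := by positivity
  refine ⟨8 * M ^ β, by positivity, fun x r hr hxr hrx => ?_⟩
  have hMx : M ≤ ‖x‖ :=
    ((Real.rpow_lt_rpow_iff hM.le (norm_nonneg x) hβ0).1 (by linarith)).le
  have hrε : r ≤ ε * ‖x‖ := by
    have := mul_rpow_le_self hβ1 (by positivity : 0 < 8 / ε) hMx
    rw [div_mul_eq_mul_div, div_le_iff₀ hε] at this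
    linarith
  have hd : 0 < ‖x‖ ^ β := Real.rpow_pos_of_pos (hM.trans_le hMx) β
  set A := {s ∈ S | embed2 s ∈ ball x r}
  have hA : (embed2 '' A).Pairwise fun y z => ‖x‖ ^ β ≤ dist y z := by
    rw [embed2_injective.injOn.pairwise_image]
    rintro s ⟨hs, hsx⟩ s' ⟨hs', hs'x⟩ hne
    have := hsep s hs s' hs' hne
    have := rpow_norm_div_two_le_of_mem_ball hβ0 hrε hsx
    have := rpow_norm_div_two_le_of_mem_ball hβ0 hrε hs'x
    rw [Function.onFun, dist_eq_norm]
    linarith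
  have hcard := ncard_le_of_pairwise_le_dist_of_subset_ball hd hxr
    (Set.image_subset_iff.2 fun _ hs => hs.2) hA
  rw [Set.ncard_image_of_injective _ embed2_injective] at hcard
  calc (A.ncard : ℝ) ≤ 36 * ((‖x‖ ^ β) ^ 2)⁻¹ * r ^ 2 := by
        convert hcard using 1; norm_num; field_simp; ring
    _ ≤ 324 * ‖x‖ ^ (-(2 * β)) * r ^ 2 := by
        rw [Real.rpow_neg (norm_nonneg x), mul_comm 2 β, Real.rpow_mul (norm_nonneg x),
          Real.rpow_two]
        gcongr
        norm_num
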